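/- arXiv:2108.10756 — 3 statements merged into one kernel-verified Lean document; each statement's English description precedes it below -/
import Mathlib

section
/- Let n ≥ 1 be an integer and let λ be a real number with λ ≠ 0 and λ ≠ 1. Then y(n-1,λ) + (λ-1)·y(n,λ) = (1/(λ^{n+1}·n!)) · Σ_{j=0}^{n} B_j · S₁(n,j). -/
/-!
The left side telescopes: the `j`-th terms of `y(n-1,λ)` and of `(λ-1)·y(n,λ)` cancel, leaving
only the last term `(-1)^n / ((n+1) λ^(n+1))`.

For the right side let `L` be the linear functional on `ℚ[X]` with `L(X^k) = B_k`. The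
recurrence `∑_{k<m} C(m,k) B_k = [m = 1]` says exactly that `L(p(X+1)) = L(p) + p'(0)`. The
falling factorial `q = X(X-1)⋯(X-n)` satisfies `q(X+1) = q + (n+1)·X(X-1)⋯(X-n+1)`, and the
coefficients of `X(X-1)⋯(X-n+1)` are the `S₁(n,j)`, so
`(n+1) ∑_j B_j S₁(n,j) = q'(0) = S₁(n+1,1) = (-1)^n n!`.
-/

/-- The numbers `y(n,λ)` from the paper:
`y(n,λ) = ∑_{j=0}^{n} (-1)^n / ((j+1) · λ^{j+1} · (λ-1)^{n+1-j})`. -/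
noncomputable def ynum (n : ℕ) (l : ℝ) : ℝ :=
  ∑ j ∈ Finset.range (n + 1),
    (-1 : ℝ) ^ n / ((j + 1) * l ^ (j + 1) * (l - 1) ^ (n + 1 - j))

/-- The signed Stirling numbers of the first kind, defined by the recurrence
`S₁(n+1,k) = S₁(n,k-1) - n·S₁(n,k)`, equivalently by
`∑_{k=0}^{n} S₁(n,k)·x^k = x·(x-1)···(x-n+1)`. -/
def S1 : ℕ → ℕ → ℤ
  | 0, 0 => 1
  | 0, _ + 1 => 0
  | n + 1, 0 => -(n : ℤ) * S1 n 0
  | n + 1, k + 1 => S1 n k - (n : ℤ) * S1 n (k + 1)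

open Finset
open Polynomial hiding bernoulli sum_bernoulli

theorem coeff_descPochhammer_eq_S1 (R : Type*) [Ring R] (n k : ℕ) :
    (descPochhammer R n).coeff k = S1 n k := by
  induction n generalizing k with
  | zero => cases k <;> simp [S1, coeff_one]
  | succ n ih =>
    have hrec :
        descPochhammer R (n + 1) = descPochhammer R n * X - C (n : R) * descPochhammer R n := by
      rw [descPochhammer_succ_right, mul_sub, map_natCast, Nat.cast_comm]
    cases k with
    | zero => simp [hrec, ih, S1]
    | succ k => simp [hrec, coeff_mul_X, ih, S1]

theorem S1_succ_zero (n : ℕ) : S1 (n + 1) 0 = 0 := by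
  induction n with
  | zero => rfl
  | succ n ih => rw [S1, ih, mul_zero]

theorem S1_succ_one (n : ℕ) : S1 (n + 1) 1 = (-1) ^ n * n.factorial := by
  induction n with
  | zero => rfl
  | succ n ih =>
    rw [S1, ih, S1_succ_zero, Nat.factorial_succ]
    push_cast
    ring

noncomputable def bernoulliFunctional : ℚ[X] →ₗ[ℚ] ℚ :=
  lsum fun k => bernoulli k • LinearMap.id

theorem bernoulliFunctional_eq_sum_range {p : ℚ[X]} {m : ℕ} (hp : p.natDegree < m) :
    bernoulliFunctional p = ∑ k ∈ range m, bernoulli k * p.coeff k :=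
  sum_over_range' p (fun k => by simp) m hp

theorem bernoulliFunctional_X_pow (n : ℕ) : bernoulliFunctional (X ^ n) = bernoulli n := by
  simp [bernoulliFunctional, ← monomial_one_right_eq_X_pow, sum_monomial_index]

theorem bernoulliFunctional_X_add_one_pow (n : ℕ) :
    bernoulliFunctional ((X + 1) ^ n) = bernoulli n + if n = 1 then 1 else 0 := by
  have hdeg : ((X + 1 : ℚ[X]) ^ n).natDegree < n + 1 := by
    rw [← C_1, natDegree_pow_X_add_C]; omega
  rw [bernoulliFunctional_eq_sum_range hdeg, sum_range_succ, ← sum_bernoulli n]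
  simp only [coeff_X_add_one_pow, Nat.choose_self, Nat.cast_one, mul_one, mul_comm]
  ring

theorem bernoulliFunctional_comp_X_add_one (p : ℚ[X]) :
    bernoulliFunctional (p.comp (X + 1)) = bernoulliFunctional p + p.coeff 1 := by
  suffices bernoulliFunctional ∘ₗ taylor 1 = bernoulliFunctional + lcoeff ℚ 1 by
    simpa [taylor_apply] using LinearMap.congr_fun this p
  refine lhom_ext' fun n => LinearMap.ext_ring ?_
  simp [monomial_one_right_eq_X_pow, bernoulliFunctional_X_add_one_pow,
    bernoulliFunctional_X_pow, coeff_X_pow, eq_comm]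

theorem descPochhammer_succ_comp_X_add_one (R : Type*) [CommRing R] (n : ℕ) :
    (descPochhammer R (n + 1)).comp (X + 1) =
      descPochhammer R (n + 1) + ((n : R) + 1) • descPochhammer R n := by
  have hshift : (X - 1 : R[X]).comp (X + 1) = X := by simp [sub_comp]
  conv_lhs => rw [descPochhammer_succ_left, mul_comp, X_comp, comp_assoc, hshift, comp_X]
  rw [descPochhammer_succ_right, smul_eq_C_mul, map_add, map_natCast, map_one]
  ring

theorem sum_bernoulli_mul_S1 (n : ℕ) :
    ∑ k ∈ range (n + 1), bernoulli k * (S1 n k : ℚ) =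
      (-1) ^ n * n.factorial / (n + 1) := by
  have hdeg : (descPochhammer ℚ n).natDegree < n + 1 := by
    rw [descPochhammer_natDegree]; omega
  have hshift := bernoulliFunctional_comp_X_add_one (descPochhammer ℚ (n + 1))
  rw [descPochhammer_succ_comp_X_add_one, map_add, map_smul, smul_eq_mul, add_right_inj,
    coeff_descPochhammer_eq_S1, S1_succ_one, bernoulliFunctional_eq_sum_range hdeg] at hshift
  simp only [coeff_descPochhammer_eq_S1] at hshift
  rw [eq_div_iff (by positivity), mul_comm, hshift]
  push_cast
  ring

theorem mul_div_mul_pow_succ {K : Type*} [Field K] {d : K} (hd : d ≠ 0) (a c : K) (k : ℕ) :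
    d * (a / (c * d ^ (k + 1))) = a / (c * d ^ k) := by
  rw [pow_succ, ← mul_assoc, mul_div_assoc', mul_comm d a, mul_div_mul_right _ _ hd]

theorem ynum_add_sub_one_mul_ynum_succ (n : ℕ) {l : ℝ} (hl : l ≠ 1) :
    ynum n l + (l - 1) * ynum (n + 1) l = (-1) ^ (n + 1) / ((n + 2) * l ^ (n + 2)) := by
  have hl' : l - 1 ≠ 0 := sub_ne_zero.mpr hl
  have hcancel : ∀ j ∈ range (n + 1),
      (-1 : ℝ) ^ n / ((j + 1) * l ^ (j + 1) * (l - 1) ^ (n + 1 - j)) +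
        (l - 1) * ((-1) ^ (n + 1) / ((j + 1) * l ^ (j + 1) * (l - 1) ^ (n + 1 + 1 - j))) = 0 := by
    intro j hj
    rw [show n + 1 + 1 - j = n + 1 - j + 1 by grind, mul_div_mul_pow_succ hl', pow_succ]
    ring
  unfold ynum
  rw [sum_range_succ _ (n + 1), mul_add, mul_sum, ← add_assoc, ← sum_add_distrib,
    sum_eq_zero hcancel, zero_add, show n + 1 + 1 - (n + 1) = 0 + 1 by omega,
    mul_div_mul_pow_succ hl']
  push_cast
  ring

theorem stmt_4_general (n : ℕ) (hn : 1 ≤ n) (l : ℝ) (hl1 : l ≠ 1) :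
    ynum (n - 1) l + (l - 1) * ynum n l =
      (1 / (l ^ (n + 1) * (n.factorial : ℝ))) *
        ∑ j ∈ Finset.range (n + 1), (bernoulli j : ℝ) * (S1 n j : ℝ) := by
  obtain ⟨m, rfl⟩ : ∃ m, n = m + 1 := ⟨n - 1, by omega⟩
  have hsum : ∑ j ∈ range (m + 1 + 1), (bernoulli j : ℝ) * (S1 (m + 1) j : ℝ) =
      (-1) ^ (m + 1) * (m + 1).factorial / (m + 1 + 1) := by
    exact_mod_cast congrArg ((↑) : ℚ → ℝ) (sum_bernoulli_mul_S1 (m + 1))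
  rw [Nat.add_sub_cancel, ynum_add_sub_one_mul_ynum_succ m hl1, hsum]
  field_simp
  ring

theorem stmt_4 (n : ℕ) (hn : 1 ≤ n) (l : ℝ) (hl0 : l ≠ 0) (hl1 : l ≠ 1) :
    ynum (n - 1) l + (l - 1) * ynum n l =
      (1 / (l ^ (n + 1) * (n.factorial : ℝ))) *
        ∑ j ∈ Finset.range (n + 1), (bernoulli j : ℝ) * (S1 n j : ℝ) :=
  stmt_4_general n hn l hl1
end

section
/- Let n ≥ 1 be an integer, let λ be a real number with λ ≠ 0 and λ ≠ 1, and let x be a real number. Then (x+1)·L_n(x) - x·L_{n-1}(x) = (-1)^n · λ^{n+1} · (x^{n+1}+1) · ((λ-1)·y(n,λ) + y(n-1,λ)). -/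
/-- The Leibnitz polynomials `L_n(x) = ∑_{l=0}^{n} x^l / ((n+1)·C(n,l))`. -/
noncomputable def Leib (n : ℕ) (x : ℝ) : ℝ :=
  ∑ l ∈ Finset.range (n + 1), x ^ l / (((n : ℝ) + 1) * (n.choose l : ℝ))

/-!
Both sides equal `(x^(n+1) + 1) / (n+1)`. On the left, the Leibniz harmonic triangle rule
`1/((m+1) C(m,j)) = 1/((m+2) C(m+1,j)) + 1/((m+2) C(m+1,j+1))` splits `x L_{n-1}(x)` into the
two shifted copies of `L_n`, leaving only the extreme coefficients `1/(n+1)` of `L_n`. On the right,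
the `j`-th term of `(λ-1) y(n,λ)` cancels the `j`-th term of `y(n-1,λ)`, and only the last term
`(-1)^n / ((n+1) λ^(n+1))` of `y(n,λ)` survives.
-/

open Finset

theorem sub_one_mul_ynum_succ_add_ynum (m : ℕ) {l : ℝ} (hl1 : l ≠ 1) :
    (l - 1) * ynum (m + 1) l + ynum m l = (-1) ^ (m + 1) / ((m + 2) * l ^ (m + 2)) := by
  have hl1' : l - 1 ≠ 0 := sub_ne_zero.mpr hl1
  have cancel : ∀ j ∈ range (m + 1),
      (l - 1) * ((-1) ^ (m + 1) / ((j + 1) * l ^ (j + 1) * (l - 1) ^ (m + 1 + 1 - j)))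
        + (-1) ^ m / ((j + 1) * l ^ (j + 1) * (l - 1) ^ (m + 1 - j)) = 0 := by
    intro j hj
    rw [show m + 1 + 1 - j = m + 1 - j + 1 by grind, pow_succ, pow_succ]
    field_simp
    ring
  rw [ynum, ynum, sum_range_succ, mul_add, mul_sum, add_right_comm, ← sum_add_distrib,
    sum_eq_zero cancel, Nat.add_sub_cancel_left]
  push_cast
  field_simp
  ring

theorem inv_add_one_mul_choose_eq {K : Type*} [Field K] [CharZero K] (m j : ℕ) (hj : j ≤ m) :
    ((m + 1 : K) * m.choose j)⁻¹ =
      ((m + 2 : K) * (m + 1).choose j)⁻¹ + ((m + 2 : K) * (m + 1).choose (j + 1))⁻¹ := by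
  have hchoose_succ_succ : ((m + 1).choose (j + 1) : K) * (j + 1) = (m + 1) * m.choose j := by
    exact_mod_cast (Nat.add_one_mul_choose_eq m j).symm
  have hchoose_succ_left : (m.choose j : K) * (m + 1) = (m + 1).choose j * (m + 1 - j) := by
    have := congrArg (Nat.cast (R := K)) (Nat.choose_mul_succ_eq m j)
    push_cast [Nat.cast_sub (show j ≤ m + 1 by omega)] at this
    exact this
  have h0 : (m.choose j : K) ≠ 0 := by exact_mod_cast (Nat.choose_pos hj).ne'
  have h1 : ((m + 1).choose j : K) ≠ 0 := by exact_mod_cast (Nat.choose_pos (by omega)).ne'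
  have h2 : ((m + 1).choose (j + 1) : K) ≠ 0 := by exact_mod_cast (Nat.choose_pos (by omega)).ne'
  have hm1 : (m + 1 : K) ≠ 0 := by exact_mod_cast m.succ_ne_zero
  have hm2 : (m + 2 : K) ≠ 0 := by exact_mod_cast (m + 1).succ_ne_zero
  field_simp
  linear_combination ((m + 1).choose j : K) * hchoose_succ_succ -
    ((m + 1).choose (j + 1) : K) * hchoose_succ_left

theorem add_one_mul_Leib_succ_sub_mul_Leib (m : ℕ) (x : ℝ) :
    (x + 1) * Leib (m + 1) x - x * Leib m x = (x ^ (m + 2) + 1) / (m + 2) := by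
  set c : ℕ → ℝ := fun j => ((m + 2 : ℝ) * (m + 1).choose j)⁻¹ with hc
  have hLeib : Leib (m + 1) x = ∑ j ∈ range (m + 2), c j * x ^ j := by
    refine sum_congr rfl fun j _ => ?_
    rw [hc, div_eq_inv_mul]
    push_cast
    ring
  have hsplit : x * Leib m x =
      ∑ j ∈ range (m + 1), c j * x ^ (j + 1) + ∑ j ∈ range (m + 1), c (j + 1) * x ^ (j + 1) := by
    rw [Leib, mul_sum, ← sum_add_distrib]
    refine sum_congr rfl fun j hj => ?_
    rw [div_eq_inv_mul, inv_add_one_mul_choose_eq m j (mem_range_succ_iff.mp hj), pow_succ]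
    ring
  have hc_zero : c 0 = (m + 2 : ℝ)⁻¹ := by simp [hc]
  have hc_last : c (m + 1) = (m + 2 : ℝ)⁻¹ := by simp [hc]
  have hshift : x * Leib (m + 1) x =
      ∑ j ∈ range (m + 1), c j * x ^ (j + 1) + c (m + 1) * x ^ (m + 2) := by
    rw [hLeib, mul_sum, sum_range_succ]
    congr 1
    · exact sum_congr rfl fun j _ => by ring
    · ring
  have hpeel : Leib (m + 1) x = ∑ j ∈ range (m + 1), c (j + 1) * x ^ (j + 1) + c 0 := by
    rw [hLeib, sum_range_succ', pow_zero, mul_one]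
  rw [hsplit, add_mul, hshift, one_mul, hpeel, hc_zero, hc_last]
  ring

theorem stmt_7 (n : ℕ) (hn : 1 ≤ n) (l : ℝ) (hl0 : l ≠ 0) (hl1 : l ≠ 1) (x : ℝ) :
    (x + 1) * Leib n x - x * Leib (n - 1) x =
      (-1 : ℝ) ^ n * l ^ (n + 1) * (x ^ (n + 1) + 1) *
        ((l - 1) * ynum n l + ynum (n - 1) l) := by
  obtain ⟨m, rfl⟩ : ∃ m, n = m + 1 := ⟨n - 1, by omega⟩
  rw [Nat.add_sub_cancel, sub_one_mul_ynum_succ_add_ynum m hl1,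
    add_one_mul_Leib_succ_sub_mul_Leib m x]
  field_simp
  rw [← pow_mul, pow_mul', neg_one_sq, one_pow, mul_one]
end

section
/- For every integer m ≥ 1, Σ_{n=0}^{m} C(m,n) · 𝓑_n(1/2) · B_{m-n} = m · Σ_{n=0}^{m-1} (n!/2^{n+1}) · y(n,1/2) · S₂(m-1,n). -/
/-- The Stirling numbers of the second kind,
`S₂(n,k) = (1/k!)·∑_{c=0}^{k} (-1)^{k-c}·C(k,c)·c^n`. -/
def S2 (n k : ℕ) : ℚ :=
  (1 / (k.factorial : ℚ)) *
    ∑ c ∈ Finset.range (k + 1), (-1 : ℚ) ^ (k - c) * (k.choose c : ℚ) * (c : ℚ) ^ n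

/-- The Apostol–Bernoulli numbers `𝓑_n(λ)`: `𝓑_0(λ) = 0` and for `n ≥ 1`,
`𝓑_n(λ) = (n·λ/(λ-1)^n)·∑_{c=0}^{n-1} (-1)^c·c!·λ^{c-1}·(λ-1)^{n-1-c}·S₂(n-1,c)`. -/
noncomputable def apostolBernoulli (n : ℕ) (l : ℝ) : ℝ :=
  if n = 0 then 0
  else ((n : ℝ) * l / (l - 1) ^ n) *
    ∑ c ∈ Finset.range n, (-1 : ℝ) ^ c * (c.factorial : ℝ) * l ^ ((c : ℤ) - 1) *
      (l - 1) ^ (n - 1 - c) * (S2 (n - 1) c : ℝ)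

/-!
At `λ = 1/2` both sides reduce to rational numbers: `𝓑_{n+1}(1/2) = -2 (n+1) F_n` with
`F_n = ∑_k k! S₂(n,k)` the Fubini numbers, and `y(n,1/2) = -2^{n+2} H_n` with
`H_n = ∑_{j ≤ n} (-1)^j / (j+1)`. For `m = k + 1` the theorem becomes
`∑_j C(k,j) F_j B_{k-j} = W_k`, where `W_k = ∑_n n! H_n S₂(k,n)`.

The Stirling transform `n ↦ ∑_a w_a S₂(n,a)` of a weight `w` has EGF `∑_a w_a (e^t - 1)^a / a!`,
so multiplying it by `e^t` adds the transform of the shifted weight `a ↦ a w_{a-1}`;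
coefficientwise this is `S₂(n+1,a+1) = ∑_j C(n,j) S₂(j,a)` plus the triangular recurrence, and no
composition of power series is needed. The weight `a!` gives `F(t) (2 - e^t) = 1`. The weight
`(-1)^a a!/(a+1)` gives a transform `R` with `R(t) (e^t - 1) = t`, so `R = B`. The weight
`a! H_a`, whose shift is `a! H_a - (-1)^a a!/(a+1)`, gives `W(t) (2 - e^t) = B(t)`. Hence
`W = F B`.
-/

open Finset fwdDiff
open scoped Nat

lemma factorial_mul_S2 (n k : ℕ) :
    (k ! : ℚ) * S2 n k = Δ_[1] ^[k] (fun x : ℚ => x ^ n) 0 := by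
  rw [fwdDiff_iter_eq_sum_shift, S2, ← mul_assoc, mul_one_div_cancel (by positivity), one_mul]
  simp [zsmul_eq_mul]

lemma S2_eq_zero_of_lt {n k : ℕ} (h : n < k) : S2 n k = 0 := by
  have := factorial_mul_S2 n k
  rw [fwdDiff_iter_pow_eq_zero_of_lt h, Pi.zero_apply] at this
  simpa [Nat.factorial_ne_zero] using this

lemma S2_zero_right (n : ℕ) : S2 n 0 = if n = 0 then 1 else 0 := by
  cases n <;> simp [S2]

lemma fwdDiff_iter_apply_add {M G : Type*} [AddCommMonoid M] [AddCommGroup G] (h : M)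
    (f : M → G) (k : ℕ) (y : M) :
    Δ_[h] ^[k] f (y + h) = Δ_[h] ^[k + 1] f y + Δ_[h] ^[k] f y := by
  rw [Function.iterate_succ_apply', fwdDiff, sub_add_cancel]

lemma fwdDiff_iter_pow_apply_one {R : Type*} [CommRing R] (n k : ℕ) :
    Δ_[1] ^[k] (fun x : R => x ^ n) 1 =
      ∑ j ∈ range (n + 1), (n.choose j : R) * Δ_[1] ^[k] (fun x : R => x ^ j) 0 := by
  have hbinom : (fun x : R => (x + 1) ^ n) =
      ∑ j ∈ range (n + 1), (n.choose j : R) • fun x => x ^ j := by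
    ext x
    simp [add_pow, mul_comm]
  rw [← zero_add (1 : R), ← fwdDiff_iter_comp_add, hbinom, fwdDiff_iter_finsetSum]
  simp [fwdDiff_iter_const_smul]

lemma fwdDiff_iter_succ_pow_succ_apply_zero {R : Type*} [CommRing R] (n k : ℕ) :
    Δ_[1] ^[k + 1] (fun x : R => x ^ (n + 1)) 0 = (k + 1) * Δ_[1] ^[k] (fun x : R => x ^ n) 1 := by
  simp only [fwdDiff_iter_eq_sum_shift, zero_add, nsmul_eq_mul, mul_one, zsmul_eq_mul]
  rw [sum_range_succ', mul_sum]
  simp only [Nat.cast_zero, ne_eq, Nat.add_one_ne_zero, not_false_eq_true, zero_pow, mul_zero,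
    add_zero, Nat.add_sub_add_right]
  refine sum_congr rfl fun d _ => ?_
  have habsorb : ((k + 1).choose (d + 1) : R) * (d + 1) = (k + 1) * k.choose d := by
    simpa using congrArg (Nat.cast : ℕ → R) (Nat.add_one_mul_choose_eq k d).symm
  push_cast
  linear_combination ((-1 : R) ^ (k - d) * ((d : R) + 1) ^ n) * habsorb

lemma factorial_succ_mul_S2_succ_succ (n k : ℕ) :
    ((k + 1) ! : ℚ) * S2 (n + 1) (k + 1) = (k + 1) * Δ_[1] ^[k] (fun x : ℚ => x ^ n) 1 := by
  rw [factorial_mul_S2, fwdDiff_iter_succ_pow_succ_apply_zero]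

lemma S2_succ_succ (n k : ℕ) : S2 (n + 1) (k + 1) = (k + 1) * S2 n (k + 1) + S2 n k := by
  have h := factorial_succ_mul_S2_succ_succ n k
  have hshift := fwdDiff_iter_apply_add (1 : ℚ) (fun x : ℚ => x ^ n) k 0
  rw [zero_add, ← factorial_mul_S2, ← factorial_mul_S2] at hshift
  rw [hshift, Nat.factorial_succ] at h
  push_cast at h
  apply mul_left_cancel₀ (show ((k : ℚ) + 1) * k ! ≠ 0 by positivity)
  linear_combination h

lemma S2_succ_succ_eq_sum_choose (n k : ℕ) :
    S2 (n + 1) (k + 1) = ∑ j ∈ range (n + 1), (n.choose j : ℚ) * S2 j k := by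
  have h := factorial_succ_mul_S2_succ_succ n k
  rw [fwdDiff_iter_pow_apply_one, Nat.factorial_succ] at h
  simp_rw [← factorial_mul_S2] at h
  push_cast at h
  apply mul_left_cancel₀ (show ((k : ℚ) + 1) * k ! ≠ 0 by positivity)
  rw [h, mul_sum, mul_sum]
  exact sum_congr rfl fun j _ => by ring

def stirlingTransform (w : ℕ → ℚ) (n : ℕ) : ℚ := ∑ a ∈ range (n + 1), w a * S2 n a

lemma stirlingTransform_eq_sum_range (w : ℕ → ℚ) {n N : ℕ} (h : n < N) :
    stirlingTransform w n = ∑ a ∈ range N, w a * S2 n a := by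
  refine sum_subset (range_subset_range.2 h) fun a _ ha => ?_
  rw [S2_eq_zero_of_lt (by simpa using ha), mul_zero]

lemma stirlingTransform_eq_sum_succ (w : ℕ → ℚ) (n : ℕ) :
    stirlingTransform w n = ∑ a ∈ range (n + 1), w (a + 1) * S2 n (a + 1) + w 0 * S2 n 0 := by
  rw [stirlingTransform_eq_sum_range w (by omega : n < n + 2), sum_range_succ']

lemma stirlingTransform_sub (w u : ℕ → ℚ) :
    stirlingTransform (w - u) = stirlingTransform w - stirlingTransform u := by
  ext n
  simp [stirlingTransform, sub_mul]

lemma sum_choose_mul_stirlingTransform (w : ℕ → ℚ) (n : ℕ) :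
    ∑ j ∈ range (n + 1), (n.choose j : ℚ) * stirlingTransform w j =
      stirlingTransform w n + ∑ a ∈ range (n + 1), (a + 1) * w a * S2 n (a + 1) := by
  calc _ = ∑ j ∈ range (n + 1), ∑ a ∈ range (n + 1), w a * ((n.choose j : ℚ) * S2 j a) := by
        refine sum_congr rfl fun j hj => ?_
        rw [stirlingTransform_eq_sum_range w (mem_range.1 hj), mul_sum]
        exact sum_congr rfl fun a _ => by ring
    _ = ∑ a ∈ range (n + 1), w a * S2 (n + 1) (a + 1) := by
        rw [sum_comm]
        simp_rw [← mul_sum, S2_succ_succ_eq_sum_choose]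
    _ = _ := by
        rw [stirlingTransform, ← sum_add_distrib]
        exact sum_congr rfl fun a _ => by rw [S2_succ_succ]; ring

open PowerSeries

def egf (a : ℕ → ℚ) : ℚ⟦X⟧ := mk fun n => a n / n !

@[simp]
lemma coeff_egf (a : ℕ → ℚ) (n : ℕ) : coeff n (egf a) = a n / n ! := coeff_mk _ _

lemma egf_injective : Function.Injective egf := by
  intro a b h
  funext n
  have h := congrArg (coeff n) h
  rwa [coeff_egf, coeff_egf, div_left_inj' (by positivity)] at h

lemma egf_add (a b : ℕ → ℚ) : egf (a + b) = egf a + egf b := by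
  ext n
  simp [add_div]

lemma egf_sub (a b : ℕ → ℚ) : egf (a - b) = egf a - egf b := by
  ext n
  simp [sub_div]

lemma egf_single_zero : egf (Pi.single 0 1) = 1 := by
  ext n
  rcases n with _ | n <;> simp [coeff_one]

lemma egf_single_one : egf (Pi.single 1 1) = X := by
  ext n
  rcases n with _ | _ | n <;> simp [coeff_X]

lemma exp_eq_egf : exp ℚ = egf 1 := by
  ext n
  simp [coeff_exp]

lemma egf_mul (a b : ℕ → ℚ) :
    egf a * egf b = egf fun n => ∑ j ∈ range (n + 1), (n.choose j : ℚ) * a j * b (n - j) := by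
  ext n
  rw [coeff_mul, Nat.sum_antidiagonal_eq_sum_range_succ_mk, coeff_egf, sum_div]
  refine sum_congr rfl fun j hj => ?_
  rw [Nat.cast_choose ℚ (mem_range_succ_iff.1 hj), coeff_egf, coeff_egf]
  field_simp

lemma egf_mul_exp (a : ℕ → ℚ) :
    egf a * exp ℚ = egf fun n => ∑ j ∈ range (n + 1), (n.choose j : ℚ) * a j := by
  simp [exp_eq_egf, egf_mul]

lemma egf_stirlingTransform_mul_exp (w : ℕ → ℚ) :
    egf (stirlingTransform w) * exp ℚ = egf (stirlingTransform w) +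
      egf fun n => ∑ a ∈ range (n + 1), (a + 1) * w a * S2 n (a + 1) := by
  rw [egf_mul_exp, ← egf_add]
  exact congrArg egf (funext (sum_choose_mul_stirlingTransform w))

lemma exp_sub_one_ne_zero : exp ℚ - 1 ≠ 0 := by
  intro h
  simpa using congrArg (coeff 1) h

lemma egf_bernoulli : egf bernoulli = bernoulliPowerSeries ℚ := by
  ext n
  simp [bernoulliPowerSeries]

lemma sum_neg_one_pow_mul_factorial_mul_S2_succ (n : ℕ) :
    ∑ a ∈ range (n + 1), (-1 : ℚ) ^ a * a ! * S2 n (a + 1) = if n = 1 then 1 else 0 := by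
  rcases n with _ | q
  · simp [S2_eq_zero_of_lt]
  · have htelescope : ∀ a ∈ range (q + 2), (-1 : ℚ) ^ a * a ! * S2 (q + 1) (a + 1) =
        (-1) ^ a * a ! * S2 q a - (-1) ^ (a + 1) * (a + 1) ! * S2 q (a + 1) := fun a _ => by
      rw [S2_succ_succ, Nat.factorial_succ]
      push_cast
      ring
    rw [sum_congr rfl htelescope, sum_range_sub', S2_eq_zero_of_lt (by omega : q < q + 2),
      S2_zero_right]
    simp

lemma bernoulli_eq_stirlingTransform :
    bernoulli = stirlingTransform fun n => (-1) ^ n * n ! / (n + 1) := by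
  have hshift : (fun n => ∑ a ∈ range (n + 1), (a + 1) * ((-1 : ℚ) ^ a * a ! / (a + 1)) *
      S2 n (a + 1)) = Pi.single 1 1 := by
    funext n
    rw [Pi.single_apply, ← sum_neg_one_pow_mul_factorial_mul_S2_succ]
    exact sum_congr rfl fun a _ => by field_simp
  have h := egf_stirlingTransform_mul_exp fun n => (-1) ^ n * n ! / (n + 1)
  rw [hshift, egf_single_one] at h
  apply egf_injective
  apply mul_right_cancel₀ exp_sub_one_ne_zero
  rw [egf_bernoulli, bernoulliPowerSeries_mul_exp_sub_one]
  linear_combination -h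

def fubini : ℕ → ℚ := stirlingTransform fun a => a !

lemma egf_fubini_mul_two_sub_exp : egf fubini * (2 - exp ℚ) = 1 := by
  have hshift : (fun n => ∑ a ∈ range (n + 1), (a + 1) * (a ! : ℚ) * S2 n (a + 1)) =
      fubini - Pi.single 0 1 := by
    funext n
    rw [Pi.sub_apply, fubini, stirlingTransform_eq_sum_succ, S2_zero_right, Pi.single_apply]
    simp [Nat.factorial_succ]
  have h : egf fubini * exp ℚ = egf fubini + _ :=
    egf_stirlingTransform_mul_exp fun a => (a ! : ℚ)
  rw [hshift, egf_sub, egf_single_zero] at h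
  linear_combination -h

def altHarmonic (n : ℕ) : ℚ := ∑ j ∈ range (n + 1), (-1) ^ j / (j + 1)

lemma altHarmonic_succ (n : ℕ) :
    altHarmonic (n + 1) = altHarmonic n + (-1) ^ (n + 1) / (n + 2) := by
  rw [altHarmonic, sum_range_succ, ← altHarmonic]
  push_cast
  ring

lemma egf_stirlingTransform_altHarmonic_mul_two_sub_exp :
    egf (stirlingTransform fun n => n ! * altHarmonic n) * (2 - exp ℚ) = egf bernoulli := by
  have hshift : (fun n => ∑ a ∈ range (n + 1), (a + 1) * (a ! * altHarmonic a) * S2 n (a + 1)) =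
      stirlingTransform (fun n => n ! * altHarmonic n) - bernoulli := by
    funext n
    rw [bernoulli_eq_stirlingTransform, ← stirlingTransform_sub, stirlingTransform_eq_sum_succ]
    have hzero : ((0 ! : ℚ) * altHarmonic 0 - (-1) ^ 0 * 0 ! / (((0 : ℕ) : ℚ) + 1)) = 0 := by
      simp [altHarmonic]
    simp only [Pi.sub_apply, hzero, zero_mul, add_zero]
    refine sum_congr rfl fun a _ => ?_
    rw [altHarmonic_succ, Nat.factorial_succ]
    push_cast
    field_simp
    ring
  have h := egf_stirlingTransform_mul_exp fun n => n ! * altHarmonic n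
  rw [hshift, egf_sub] at h
  linear_combination -h

theorem sum_choose_mul_fubini_mul_bernoulli (n : ℕ) :
    ∑ j ∈ range (n + 1), (n.choose j : ℚ) * fubini j * bernoulli (n - j) =
      stirlingTransform (fun k => k ! * altHarmonic k) n := by
  have h : egf fubini * egf bernoulli = egf (stirlingTransform fun k => k ! * altHarmonic k) := by
    linear_combination egf (stirlingTransform fun k => k ! * altHarmonic k) *
      egf_fubini_mul_two_sub_exp - egf fubini * egf_stirlingTransform_altHarmonic_mul_two_sub_exp
  rw [egf_mul] at h
  exact congrFun (egf_injective h) n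

lemma ynum_half (n : ℕ) : ynum n (1 / 2) = -2 ^ (n + 2) * (altHarmonic n : ℝ) := by
  rw [ynum, altHarmonic]
  push_cast
  rw [mul_sum]
  refine sum_congr rfl fun j hj => ?_
  obtain ⟨d, rfl⟩ := Nat.exists_eq_add_of_le (mem_range_succ_iff.1 hj)
  rw [show j + d + 1 - j = d + 1 by omega, show (1 / 2 - 1 : ℝ) = -1 * (1 / 2) by norm_num]
  simp only [mul_pow, div_pow, one_pow]
  field_simp
  ring

lemma apostolBernoulli_succ_half (n : ℕ) :
    apostolBernoulli (n + 1) (1 / 2) = -2 * (n + 1) * (fubini n : ℝ) := by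
  rw [apostolBernoulli, if_neg n.succ_ne_zero, fubini, stirlingTransform, Nat.add_sub_cancel]
  push_cast
  rw [mul_sum, mul_sum]
  refine sum_congr rfl fun c hc => ?_
  obtain ⟨d, rfl⟩ := Nat.exists_eq_add_of_le (mem_range_succ_iff.1 hc)
  rw [show c + d - c = d by omega, zpow_sub₀ (by norm_num), zpow_natCast, zpow_one,
    show (1 / 2 - 1 : ℝ) = -1 * (1 / 2) by norm_num, mul_pow, mul_pow]
  field_simp
  ring

theorem stmt_14_general (m : ℕ) :
    ∑ n ∈ Finset.range (m + 1),
        (m.choose n : ℝ) * apostolBernoulli n (1 / 2) * (bernoulli (m - n) : ℝ) =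
      (m : ℝ) * ∑ n ∈ Finset.range m,
        ((n.factorial : ℝ) / 2 ^ (n + 1)) * ynum n (1 / 2) * (S2 (m - 1) n : ℝ) := by
  rcases m with _ | k
  · simp [apostolBernoulli]
  calc _ = -2 * (k + 1) * ∑ j ∈ range (k + 1),
          (k.choose j : ℝ) * fubini j * bernoulli (k - j) := by
        rw [sum_range_succ', mul_sum, apostolBernoulli, if_pos rfl, mul_zero, zero_mul, add_zero]
        refine sum_congr rfl fun j _ => ?_
        have habsorb : ((k + 1).choose (j + 1) * (j + 1) : ℝ) = (k + 1) * k.choose j := by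
          exact_mod_cast (Nat.add_one_mul_choose_eq k j).symm
        rw [apostolBernoulli_succ_half, Nat.add_sub_add_right]
        linear_combination (-2 * fubini j * bernoulli (k - j) : ℝ) * habsorb
    _ = -2 * (k + 1) * (stirlingTransform (fun n => n ! * altHarmonic n) k : ℝ) := by
        rw [← sum_choose_mul_fubini_mul_bernoulli]
        push_cast
        rfl
    _ = _ := by
        rw [stirlingTransform, mul_sum]
        push_cast
        rw [mul_sum]
        refine sum_congr rfl fun j _ => ?_
        rw [ynum_half]
        field_simp
        ring

theorem stmt_14 (m : ℕ) (hm : 1 ≤ m) :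
    ∑ n ∈ Finset.range (m + 1),
        (m.choose n : ℝ) * apostolBernoulli n (1 / 2) * (bernoulli (m - n) : ℝ) =
      (m : ℝ) * ∑ n ∈ Finset.range m,
        ((n.factorial : ℝ) / 2 ^ (n + 1)) * ynum n (1 / 2) * (S2 (m - 1) n : ℝ) :=
  stmt_14_general m
end
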